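/- arXiv:math/9204231 — 2 statements merged into one kernel-verified Lean document; each statement's English description precedes it below -/
import Mathlib

section
/- Let W be a finite-dimensional real vector space, V a finite set, and φ : V → W a map (a 'vector configuration'). Let C ⊆ ({-,0,+})^V be the set of all sign vectors of the form v ↦ sign(f(φ v)) as f ranges over the linear functionals on W. Then: (1) the identically-zero sign vector belongs to C; (2) if c ∈ C then −c ∈ C; (3) if c, d ∈ C then the composition c∘d belongs to C, where (c∘d)(v) = c(v) if c(v) ≠ 0 and (c∘d)(v) = d(v) otherwise; (4) for all c, d ∈ C and every v ∈ V with c(v) = + and d(v) = −, there exists e ∈ C such that e(v) = 0; e(w) = 0 whenever c(w) = d(w) = 0; e(w) = + whenever c(w) ≠ −, d(w) ≠ − and c(w), d(w) are not both 0; and e(w) = − whenever c(w) ≠ +, d(w) ≠ + and c(w), d(w) are not both 0. (That is, the sign vectors of a realizable configuration satisfy the covector axioms of an oriented matroid.) -/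
/-- Composition of two sign vectors: `(c ∘ d)(v) = c v` if `c v ≠ 0`, else `d v`. -/
def signCompose {V : Type*} (c d : V → SignType) : V → SignType :=
  fun v => if c v ≠ 0 then c v else d v

/-- The set of sign vectors realized by linear functionals on a vector configuration. -/
def realizedCovectors (V : Type*) (W : Type*) [AddCommGroup W] [Module ℝ W]
    (φ : V → W) : Set (V → SignType) :=
  {c | ∃ f : W →ₗ[ℝ] ℝ, ∀ v : V, c v = SignType.sign (f (φ v))}

lemma sign_add_eq_left' {a b : ℝ} (h : |b| < |a|) : SignType.sign (a + b) = SignType.sign a := by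
  rcases lt_trichotomy a 0 with ha | ha | ha
  · rw [sign_neg ha, sign_neg]
    have := abs_lt.mp h
    rw [abs_of_neg ha] at this
    linarith [this.2]
  · simp [ha] at h; linarith [abs_nonneg b]
  · rw [sign_pos ha, sign_pos]
    have := abs_lt.mp h
    rw [abs_of_pos ha] at this
    linarith [this.1]

lemma exists_eps {V : Type*} [Fintype V] (F G : V → ℝ) :
    ∃ ε : ℝ, 0 < ε ∧ ∀ v, F v ≠ 0 → ε * |G v| < |F v| := by
  classical
  set S : Finset V := Finset.univ.filter (fun v => F v ≠ 0) with hS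
  rcases S.eq_empty_or_nonempty with h | h
  · refine ⟨1, one_pos, fun v hv => absurd ?_ (Finset.notMem_empty v)⟩
    rw [← h]; simp [hS, hv]
  · refine ⟨S.inf' h (fun v => |F v| / (|G v| + 1)), ?_, ?_⟩
    · apply (Finset.lt_inf'_iff h).mpr
      intro v hv
      have hv' : F v ≠ 0 := by simpa [hS] using hv
      exact div_pos (abs_pos.mpr hv') (by positivity)
    · intro v hv
      have hvS : v ∈ S := by simp [hS, hv]
      have h1 : S.inf' h (fun v => |F v| / (|G v| + 1)) ≤ |F v| / (|G v| + 1) :=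
        Finset.inf'_le _ hvS
      have h2 : 0 < |G v| + 1 := by positivity
      have h3 : |F v| / (|G v| + 1) * |G v| < |F v| := by
        rw [div_mul_eq_mul_div, div_lt_iff₀ h2]
        have : 0 < |F v| := abs_pos.mpr hv
        nlinarith [abs_nonneg (G v)]
      calc S.inf' h (fun v => |F v| / (|G v| + 1)) * |G v|
          ≤ |F v| / (|G v| + 1) * |G v| := by
            exact mul_le_mul_of_nonneg_right h1 (abs_nonneg _)
        _ < |F v| := h3

/-- The sign vectors of a realizable vector configuration satisfy the covector
axioms of an oriented matroid. -/
theorem realizedCovectors_oriented_matroid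
    (V : Type*) [Fintype V] (W : Type*) [AddCommGroup W] [Module ℝ W]
    [FiniteDimensional ℝ W] (φ : V → W) :
    -- (1) the zero sign vector is a covector
    ((fun _ : V => (0 : SignType)) ∈ realizedCovectors V W φ) ∧
    -- (2) closure under negation
    (∀ c ∈ realizedCovectors V W φ, (fun v => -(c v)) ∈ realizedCovectors V W φ) ∧
    -- (3) closure under composition
    (∀ c ∈ realizedCovectors V W φ, ∀ d ∈ realizedCovectors V W φ,
      signCompose c d ∈ realizedCovectors V W φ) ∧
    -- (4) elimination axiom
    (∀ c ∈ realizedCovectors V W φ, ∀ d ∈ realizedCovectors V W φ,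
      ∀ v : V, c v = SignType.pos → d v = SignType.neg →
        ∃ e ∈ realizedCovectors V W φ,
          e v = 0 ∧
          (∀ w : V, c w = 0 → d w = 0 → e w = 0) ∧
          (∀ w : V, c w ≠ SignType.neg → d w ≠ SignType.neg →
            ¬(c w = 0 ∧ d w = 0) → e w = SignType.pos) ∧
          (∀ w : V, c w ≠ SignType.pos → d w ≠ SignType.pos →
            ¬(c w = 0 ∧ d w = 0) → e w = SignType.neg)) := by
  refine ⟨⟨0, fun v => by simp⟩, ?_, ?_, ?_⟩
  · rintro c ⟨f, hf⟩
    exact ⟨-f, fun v => by show -(c v) = _; rw [hf v]; simp [Left.sign_neg]⟩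
  · rintro c ⟨f, hf⟩ d ⟨g, hg⟩
    obtain ⟨ε, hε, hε'⟩ := exists_eps (fun v => f (φ v)) (fun v => g (φ v))
    refine ⟨f + ε • g, fun v => ?_⟩
    simp only [signCompose, LinearMap.add_apply, LinearMap.smul_apply, smul_eq_mul]
    by_cases h : c v = 0
    · simp only [h, ne_eq, not_true_eq_false, if_false]
      have hf0 : f (φ v) = 0 := by
        have := hf v; rw [h] at this; exact (sign_eq_zero_iff.mp this.symm)
      rw [hf0, zero_add, hg v, sign_mul, sign_pos hε, one_mul]
    · simp only [h, ne_eq, not_false_eq_true, if_true]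
      have hf0 : f (φ v) ≠ 0 := by
        intro h0; apply h; rw [hf v, h0, sign_zero]
      rw [hf v, sign_add_eq_left']
      rw [abs_mul, abs_of_pos hε]
      exact hε' v hf0
  · rintro c ⟨f, hf⟩ d ⟨g, hg⟩ v hcv hdv
    have hfv : 0 < f (φ v) := by
      rw [hf v, SignType.pos_eq_one, sign_eq_one_iff] at hcv; exact hcv
    have hgv : g (φ v) < 0 := by
      rw [hg v, SignType.neg_eq_neg_one, sign_eq_neg_one_iff] at hdv; exact hdv
    set a : ℝ := -(g (φ v)) with ha
    set b : ℝ := f (φ v) with hb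
    have hapos : 0 < a := by simp [ha]; linarith
    have hbpos : 0 < b := hfv
    refine ⟨fun w => SignType.sign ((a • f + b • g) (φ w)), ⟨a • f + b • g, fun w => rfl⟩,
      ?_, ?_, ?_, ?_⟩
    · simp only [LinearMap.add_apply, LinearMap.smul_apply, smul_eq_mul]
      rw [show a * f (φ v) + b * g (φ v) = 0 by rw [ha, hb]; ring, sign_zero]
    · intro w hcw hdw
      have h1' : f (φ w) = 0 := by
        have := hf w; rw [hcw] at this; exact sign_eq_zero_iff.mp this.symm
      have h2' : g (φ w) = 0 := by
        have := hg w; rw [hdw] at this; exact sign_eq_zero_iff.mp this.symm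
      simp [h1', h2']
    · intro w hcw hdw hnb
      have h1 : 0 ≤ f (φ w) := by
        by_contra h; apply hcw
        rw [hf w, SignType.neg_eq_neg_one, sign_eq_neg_one_iff]; linarith
      have h2 : 0 ≤ g (φ w) := by
        by_contra h; apply hdw
        rw [hg w, SignType.neg_eq_neg_one, sign_eq_neg_one_iff]; linarith
      have h3 : f (φ w) ≠ 0 ∨ g (φ w) ≠ 0 := by
        by_contra h; push_neg at h
        exact hnb ⟨by rw [hf w, h.1, sign_zero], by rw [hg w, h.2, sign_zero]⟩
      have : 0 < a * f (φ w) + b * g (φ w) := by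
        rcases h3 with h3 | h3
        · have : 0 < f (φ w) := lt_of_le_of_ne h1 (Ne.symm h3)
          nlinarith
        · have : 0 < g (φ w) := lt_of_le_of_ne h2 (Ne.symm h3)
          nlinarith
      simp only [LinearMap.add_apply, LinearMap.smul_apply, smul_eq_mul,
        SignType.pos_eq_one]
      exact sign_pos this
    · intro w hcw hdw hnb
      have h1 : f (φ w) ≤ 0 := by
        by_contra h; apply hcw
        rw [hf w, SignType.pos_eq_one, sign_eq_one_iff]; linarith
      have h2 : g (φ w) ≤ 0 := by
        by_contra h; apply hdw
        rw [hg w, SignType.pos_eq_one, sign_eq_one_iff]; linarith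
      have h3 : f (φ w) ≠ 0 ∨ g (φ w) ≠ 0 := by
        by_contra h; push_neg at h
        exact hnb ⟨by rw [hf w, h.1, sign_zero], by rw [hg w, h.2, sign_zero]⟩
      have : a * f (φ w) + b * g (φ w) < 0 := by
        rcases h3 with h3 | h3
        · have : f (φ w) < 0 := lt_of_le_of_ne h1 h3
          nlinarith
        · have : g (φ w) < 0 := lt_of_le_of_ne h2 h3
          nlinarith
      simp only [LinearMap.add_apply, LinearMap.smul_apply, smul_eq_mul,
        SignType.neg_eq_neg_one]
      exact sign_neg this
end

section
/- Let W be a finite-dimensional real vector space, V a finite set, and φ : V → W a map. Let f, g be linear functionals on W and suppose v ∈ V satisfies f(φ v) > 0 and g(φ v) < 0. Then there exists a linear functional h on W (for instance h = (−g(φ v))·f + (f(φ v))·g) such that: h(φ v) = 0; for every w ∈ V with f(φ w) = 0 and g(φ w) = 0 one has h(φ w) = 0; for every w ∈ V with f(φ w) ≥ 0, g(φ w) ≥ 0 and not both zero one has h(φ w) > 0; and for every w ∈ V with f(φ w) ≤ 0, g(φ w) ≤ 0 and not both zero one has h(φ w) < 0. (Realizability of the elimination axiom, covector axiom 4, for vector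 configurations.) -/
/-!
Take `h = (-g p) • f + (f p) • g` with `p = φ v`: both coefficients are positive, so `h` vanishes
at `p` by construction, and on a point where `f` and `g` have weakly the same sign, not both
zero, the two terms of `h` share that sign and one of them is strict.
-/

section OrderedRing

variable {R : Type*} [Ring R] [LinearOrder R] [IsStrictOrderedRing R]

theorem add_mul_pos_of_nonneg_of_not_both_zero {a b x y : R} (ha : 0 < a) (hb : 0 < b)
    (hx : 0 ≤ x) (hy : 0 ≤ y) (hxy : ¬(x = 0 ∧ y = 0)) : 0 < a * x + b * y := by
  rcases hx.lt_or_eq with hx | rfl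
  · exact add_pos_of_pos_of_nonneg (mul_pos ha hx) (mul_nonneg hb.le hy)
  · have hy : 0 < y := hy.lt_of_ne fun h => hxy ⟨rfl, h.symm⟩
    simpa using mul_pos hb hy

theorem add_mul_neg_of_nonpos_of_not_both_zero {a b x y : R} (ha : 0 < a) (hb : 0 < b)
    (hx : x ≤ 0) (hy : y ≤ 0) (hxy : ¬(x = 0 ∧ y = 0)) : a * x + b * y < 0 := by
  simpa only [mul_neg, ← neg_add, neg_pos] using
    add_mul_pos_of_nonneg_of_not_both_zero ha hb (neg_nonneg.mpr hx) (neg_nonneg.mpr hy)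
      (by simpa only [neg_eq_zero] using hxy)

end OrderedRing

namespace LinearMap

variable {K M : Type*} [Field K] [AddCommGroup M] [Module K M]

def eliminate (f g : M →ₗ[K] K) (p : M) : M →ₗ[K] K :=
  (-g p) • f + f p • g

theorem eliminate_apply (f g : M →ₗ[K] K) (p x : M) :
    eliminate f g p x = -g p * f x + f p * g x :=
  rfl

theorem eliminate_apply_self (f g : M →ₗ[K] K) (p : M) : eliminate f g p p = 0 := by
  rw [eliminate_apply]; ring

theorem eliminate_apply_of_eq_zero (f g : M →ₗ[K] K) (p : M) {x : M} (hf : f x = 0)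
    (hg : g x = 0) : eliminate f g p x = 0 := by
  rw [eliminate_apply, hf, hg]; ring

end LinearMap

theorem exists_functional_realizing_elimination_general
    (V : Type*) (W : Type*) [AddCommGroup W] [Module ℝ W]
    (φ : V → W) (f g : W →ₗ[ℝ] ℝ) (v : V)
    (hf : 0 < f (φ v)) (hg : g (φ v) < 0) :
    ∃ h : W →ₗ[ℝ] ℝ,
      h (φ v) = 0 ∧
      (∀ w : V, f (φ w) = 0 → g (φ w) = 0 → h (φ w) = 0) ∧
      (∀ w : V, 0 ≤ f (φ w) → 0 ≤ g (φ w) → ¬(f (φ w) = 0 ∧ g (φ w) = 0) →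
        0 < h (φ w)) ∧
      (∀ w : V, f (φ w) ≤ 0 → g (φ w) ≤ 0 → ¬(f (φ w) = 0 ∧ g (φ w) = 0) →
        h (φ w) < 0) := by
  have hg' : 0 < -g (φ v) := neg_pos.mpr hg
  exact ⟨LinearMap.eliminate f g (φ v), LinearMap.eliminate_apply_self f g (φ v),
    fun _ => LinearMap.eliminate_apply_of_eq_zero f g (φ v),
    fun _ => add_mul_pos_of_nonneg_of_not_both_zero hg' hf,
    fun _ => add_mul_neg_of_nonpos_of_not_both_zero hg' hf⟩

/-- Realizability of the elimination axiom (covector axiom 4) for vector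
configurations: given functionals `f, g` with `f (φ v) > 0` and `g (φ v) < 0`,
there is a functional `h` eliminating `v` with the required sign behavior. -/
theorem exists_functional_realizing_elimination
    (V : Type*) [Fintype V] (W : Type*) [AddCommGroup W] [Module ℝ W]
    [FiniteDimensional ℝ W] (φ : V → W) (f g : W →ₗ[ℝ] ℝ) (v : V)
    (hf : 0 < f (φ v)) (hg : g (φ v) < 0) :
    ∃ h : W →ₗ[ℝ] ℝ,
      h (φ v) = 0 ∧
      (∀ w : V, f (φ w) = 0 → g (φ w) = 0 → h (φ w) = 0) ∧
      (∀ w : V, 0 ≤ f (φ w) → 0 ≤ g (φ w) → ¬(f (φ w) = 0 ∧ g (φ w) = 0) →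
        0 < h (φ w)) ∧
      (∀ w : V, f (φ w) ≤ 0 → g (φ w) ≤ 0 → ¬(f (φ w) = 0 ∧ g (φ w) = 0) →
        h (φ w) < 0) :=
  exists_functional_realizing_elimination_general V W φ f g v hf hg
end
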